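/- arXiv:2507.18045 — 9 statements merged into one kernel-verified Lean document; each statement's English description precedes it below -/
import Mathlib

section
/- Let p be a prime with p ≡ 1 (mod 8). Then there exists a pair of integers (a, b) with p = a² + 2b² and a ≡ 1 (mod 4); moreover, this pair is unique up to the sign of b, i.e., if (a, b) and (a', b') are two pairs of integers with p = a² + 2b², a ≡ 1 (mod 4), p = a'² + 2b'², a' ≡ 1 (mod 4), then a = a' and b = b' or b = −b'. -/
/-!
Since `-2` is a square modulo `p`, say `s² ≡ -2`, Thue's lemma gives `x ≡ s y (mod p)` with
`x² < p`, `0 < y² ≤ p`; then `p ∣ x² + 2y² < 3p`, so `x² + 2y²` is `p` or `2p`, and in the second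
case `x = 2z` and `p = y² + 2z²`. The sign of `a` is fixed by `a ≡ 1 (mod 4)`, `a` being odd.
For uniqueness, if `p = a² + 2b² = c² + 2d²` then `(ad - cb)(ad + cb) = p(d² - b²)`, and both
`(ac ± 2bd)² + 2(ad ∓ cb)² = p²`, so the factor divisible by `p` is `0`, forcing `b² = d²`.
-/

-- Thue's lemma, from Dirichlet's approximation of `s / n` by fractions of denominator `≤ √n`.
theorem Int.exists_sq_lt_sq_le_dvd_sub_mul {n : ℕ} (hn : 0 < n) (s : ℤ) :
    ∃ x y : ℤ, 0 < y ∧ x ^ 2 < n ∧ y ^ 2 ≤ n ∧ (n : ℤ) ∣ x - s * y := by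
  set N := n.sqrt
  obtain ⟨j, k, hk, hkN, hjk⟩ := Real.exists_int_int_abs_mul_sub_le ((s : ℝ) / n) (Nat.sqrt_pos.2 hn)
  refine ⟨k * s - j * n, k, hk, ?_, ?_, ⟨-j, by ring⟩⟩
  · have hnR : (0 : ℝ) < n := by exact_mod_cast hn
    have hN : (n : ℝ) < (N + 1) ^ 2 := by exact_mod_cast n.lt_succ_sqrt'
    have hx : |((k * s - j * n : ℤ) : ℝ)| ≤ n / (N + 1) := by
      have : ((k * s - j * n : ℤ) : ℝ) = n * (k * (s / n) - j) := by push_cast; field_simp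
      rw [this, abs_mul, abs_of_pos hnR]
      calc (n : ℝ) * |(k : ℝ) * ((s : ℝ) / n) - j| ≤ n * (1 / (N + 1)) := by gcongr
        _ = n / (N + 1) := mul_one_div _ _
    have : ((k * s - j * n : ℤ) : ℝ) ^ 2 < n := calc
      _ = |((k * s - j * n : ℤ) : ℝ)| ^ 2 := (sq_abs _).symm
      _ ≤ (n / (N + 1)) ^ 2 := pow_le_pow_left₀ (abs_nonneg _) hx 2
      _ < n := by
        rw [div_pow, div_lt_iff₀ (by positivity)]
        nlinarith
    exact_mod_cast this
  · have : k ^ 2 ≤ (N : ℤ) ^ 2 := pow_le_pow_left₀ hk.le hkN 2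
    have hNn : (N : ℤ) ^ 2 ≤ n := by exact_mod_cast n.sqrt_le'
    linarith

theorem Int.exists_sq_add_two_sq_of_dvd_sq_add_two {n : ℕ} (hn : 0 < n) {s : ℤ}
    (h : (n : ℤ) ∣ s ^ 2 + 2) : ∃ a b : ℤ, (n : ℤ) = a ^ 2 + 2 * b ^ 2 := by
  obtain ⟨x, y, hy, hx, hyn, hxy⟩ := Int.exists_sq_lt_sq_le_dvd_sub_mul hn s
  obtain ⟨k, hk⟩ : (n : ℤ) ∣ x ^ 2 + 2 * y ^ 2 := by
    rw [show x ^ 2 + 2 * y ^ 2 = (x - s * y) * (x + s * y) + y ^ 2 * (s ^ 2 + 2) by ring]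
    exact (hxy.mul_right _).add (h.mul_left _)
  have hk0 : 0 < k := by nlinarith
  have hk3 : k < 3 := by nlinarith
  interval_cases k
  · exact ⟨x, y, by linarith⟩
  · obtain ⟨z, rfl⟩ : Even x := (Int.even_pow' two_ne_zero).1 ⟨n - y ^ 2, by linarith⟩
    exact ⟨y, z, by linarith⟩

theorem Nat.Prime.exists_sq_add_two_sq {p : ℕ} (hp : p.Prime) (h : p % 8 = 1 ∨ p % 8 = 3) :
    ∃ a b : ℤ, (p : ℤ) = a ^ 2 + 2 * b ^ 2 := by
  have := Fact.mk hp
  obtain ⟨s, hs⟩ := (ZMod.exists_sq_eq_neg_two_iff (by omega)).2 h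
  refine Int.exists_sq_add_two_sq_of_dvd_sq_add_two hp.pos (s := s.val) ?_
  rw [← ZMod.intCast_zmod_eq_zero_iff_dvd]
  push_cast
  rw [ZMod.natCast_zmod_val, sq, ← hs, neg_add_cancel]

theorem Int.exists_sq_add_two_sq_emod_four_eq_one {n a b : ℤ} (hn : Odd n)
    (h : n = a ^ 2 + 2 * b ^ 2) : ∃ a' : ℤ, n = a' ^ 2 + 2 * b ^ 2 ∧ a' % 4 = 1 := by
  have ha : Odd a := by
    rw [h] at hn
    simpa [parity_simps] using hn
  obtain ⟨k, rfl⟩ := ha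
  rcases Int.emod_two_eq_zero_or_one k with hk | hk
  · exact ⟨2 * k + 1, h, by omega⟩
  · exact ⟨-(2 * k + 1), by rw [h]; ring, by omega⟩

theorem Int.eq_zero_of_dvd_of_sq_add_two_sq_eq_sq {p t u : ℤ} (hp : p ≠ 0) (hdvd : p ∣ t)
    (h : u ^ 2 + 2 * t ^ 2 = p ^ 2) : t = 0 := by
  refine Int.eq_zero_of_dvd_of_natAbs_lt_natAbs hdvd ?_
  rw [Int.natAbs_lt_iff_sq_lt]
  nlinarith [sq_nonneg u, sq_pos_of_ne_zero hp]

theorem Int.sq_eq_sq_of_sq_add_two_sq_eq {p a b c d : ℤ} (hp : Prime p)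
    (h₁ : p = a ^ 2 + 2 * b ^ 2) (h₂ : p = c ^ 2 + 2 * d ^ 2) : a ^ 2 = c ^ 2 ∧ b ^ 2 = d ^ 2 := by
  have hfactor : (a * d - c * b) * (a * d + c * b) = p * (d ^ 2 - b ^ 2) := by
    linear_combination (-d ^ 2) * h₁ + b ^ 2 * h₂
  have hzero : (a * d - c * b) * (a * d + c * b) = 0 := by
    rcases hp.dvd_or_dvd ⟨_, hfactor⟩ with hdvd | hdvd
    · rw [Int.eq_zero_of_dvd_of_sq_add_two_sq_eq_sq hp.ne_zero hdvd (u := a * c + 2 * b * d)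
        (by linear_combination (-(c ^ 2 + 2 * d ^ 2)) * h₁ - p * h₂), zero_mul]
    · rw [Int.eq_zero_of_dvd_of_sq_add_two_sq_eq_sq hp.ne_zero hdvd (u := a * c - 2 * b * d)
        (by linear_combination (-(c ^ 2 + 2 * d ^ 2)) * h₁ - p * h₂), mul_zero]
  have hbd : d ^ 2 - b ^ 2 = 0 := (mul_eq_zero.1 (hfactor ▸ hzero)).resolve_left hp.ne_zero
  exact ⟨by linarith, by linarith⟩

theorem Int.eq_of_sq_eq_sq_of_emod_four_eq_one {a c : ℤ} (h : a ^ 2 = c ^ 2) (ha : a % 4 = 1)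
    (hc : c % 4 = 1) : a = c :=
  (sq_eq_sq_iff_eq_or_eq_neg.1 h).resolve_right fun h => by omega

/-- Let `p` be a prime with `p ≡ 1 (mod 8)`. Then there exists a pair of integers `(a, b)`
with `p = a² + 2b²` and `a ≡ 1 (mod 4)`, and this pair is unique up to the sign of `b`. -/
theorem stmt_1 (p : ℕ) (hp : p.Prime) (h8 : p % 8 = 1) :
    (∃ a b : ℤ, (p : ℤ) = a ^ 2 + 2 * b ^ 2 ∧ a % 4 = 1) ∧
    (∀ a b a' b' : ℤ, (p : ℤ) = a ^ 2 + 2 * b ^ 2 → a % 4 = 1 →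
      (p : ℤ) = a' ^ 2 + 2 * b' ^ 2 → a' % 4 = 1 → a = a' ∧ (b = b' ∨ b = -b')) := by
  refine ⟨?_, fun a b a' b' h ha h' ha' => ?_⟩
  · obtain ⟨a, b, hab⟩ := hp.exists_sq_add_two_sq (Or.inl h8)
    have hodd : Odd (p : ℤ) := by
      rw [Int.odd_iff]
      omega
    obtain ⟨a', ha', ha'4⟩ := Int.exists_sq_add_two_sq_emod_four_eq_one hodd hab
    exact ⟨a', b, ha', ha'4⟩
  · obtain ⟨haa, hbb⟩ := Int.sq_eq_sq_of_sq_add_two_sq_eq (Nat.prime_iff_prime_int.1 hp) h h'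
    exact ⟨Int.eq_of_sq_eq_sq_of_emod_four_eq_one haa ha ha', sq_eq_sq_iff_eq_or_eq_neg.1 hbb⟩
end

section
/- Let n ≥ 1 be an even integer, let u = n², and suppose p = 4u² + 12u + 1 is prime. Then p = (1 − 2u)² + 4(2n)², and 1 − 2u ≡ 1 (mod 4); moreover, for every pair of integers (x, y) with p = x² + 4y² and x ≡ 1 (mod 4), one has x = 1 − 2u and y = 2n or y = −2n. -/
/-!
A prime has essentially one representation as a sum of two squares: if
`p = a² + b² = c² + d²` then `p ∣ a²d² - b²c² = (ad - bc)(ad + bc)`, and since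
`(ad ∓ bc)² + (ac ± bd)² = p²` the factor divisible by `p` is either `0` or `±p`.
Either way one of `ad = ±bc`, `ac = ±bd` holds, which forces `{a², b²} = {c², d²}`.
Applied to `p = x² + (2y)² = (1 - 2u)² + (4n)²`, parity rules out `x² = (4n)²`,
and `x ≡ 1 - 2u ≡ 1 (mod 4)` fixes the sign of `x`.
-/

namespace Int

lemma eq_zero_or_eq_zero_of_dvd_of_sq_add_sq_eq_sq {p m k : ℤ} (hm : p ∣ m)
    (h : m ^ 2 + k ^ 2 = p ^ 2) : m = 0 ∨ k = 0 := by
  refine or_iff_not_imp_left.mpr fun hm0 => ?_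
  have hpm : |p| ≤ |m| := Int.le_of_dvd (abs_pos.mpr hm0) ((abs_dvd_abs p m).mpr hm)
  have : p ^ 2 ≤ m ^ 2 := sq_le_sq.mpr hpm
  exact pow_eq_zero_iff two_ne_zero |>.mp (by nlinarith [sq_nonneg k])

section SumTwoSquares

variable {p a b c d : ℤ}

lemma sq_eq_sq_of_mul_sq_eq (hp0 : p ≠ 0) (hab : p = a ^ 2 + b ^ 2) (hcd : p = c ^ 2 + d ^ 2)
    (h : (a * d) ^ 2 = (b * c) ^ 2) : a ^ 2 = c ^ 2 ∧ b ^ 2 = d ^ 2 := by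
  have hac : a ^ 2 = c ^ 2 :=
    mul_left_cancel₀ hp0 (by linear_combination a ^ 2 * hcd - c ^ 2 * hab + h)
  exact ⟨hac, by linear_combination hcd - hab - hac⟩

lemma sq_add_sq_unique_of_prime (hp : Prime p) (hab : p = a ^ 2 + b ^ 2)
    (hcd : p = c ^ 2 + d ^ 2) :
    (a ^ 2 = c ^ 2 ∧ b ^ 2 = d ^ 2) ∨ (a ^ 2 = d ^ 2 ∧ b ^ 2 = c ^ 2) := by
  have hdc : p = d ^ 2 + c ^ 2 := by linear_combination hcd
  have hdvd : p ∣ (a * d - b * c) * (a * d + b * c) :=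
    ⟨a ^ 2 - c ^ 2, by linear_combination c ^ 2 * hab - a ^ 2 * hcd⟩
  rcases hp.dvd_or_dvd hdvd with h | h
  · have hsq : (a * d - b * c) ^ 2 + (a * c + b * d) ^ 2 = p ^ 2 := by
      linear_combination -(c ^ 2 + d ^ 2) * hab - p * hcd
    rcases eq_zero_or_eq_zero_of_dvd_of_sq_add_sq_eq_sq h hsq with h0 | h0
    · exact .inl (sq_eq_sq_of_mul_sq_eq hp.ne_zero hab hcd (by rw [sub_eq_zero.mp h0]))
    · exact .inr (sq_eq_sq_of_mul_sq_eq hp.ne_zero hab hdc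
        (by rw [eq_neg_of_add_eq_zero_left h0, neg_sq]))
  · have hsq : (a * d + b * c) ^ 2 + (a * c - b * d) ^ 2 = p ^ 2 := by
      linear_combination -(c ^ 2 + d ^ 2) * hab - p * hcd
    rcases eq_zero_or_eq_zero_of_dvd_of_sq_add_sq_eq_sq h hsq with h0 | h0
    · exact .inl (sq_eq_sq_of_mul_sq_eq hp.ne_zero hab hcd
        (by rw [eq_neg_of_add_eq_zero_left h0, neg_sq]))
    · exact .inr (sq_eq_sq_of_mul_sq_eq hp.ne_zero hab hdc (by rw [sub_eq_zero.mp h0]))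

end SumTwoSquares

end Int

theorem stmt_2_general (n : ℤ) (hne : Even n) (u : ℤ) (hu : u = n ^ 2)
    (p : ℕ) (hp : p.Prime) (hpu : (p : ℤ) = 4 * u ^ 2 + 12 * u + 1) :
    (p : ℤ) = (1 - 2 * u) ^ 2 + 4 * (2 * n) ^ 2 ∧ (1 - 2 * u) % 4 = 1 ∧
    (∀ x y : ℤ, (p : ℤ) = x ^ 2 + 4 * y ^ 2 → x % 4 = 1 →
      x = 1 - 2 * u ∧ (y = 2 * n ∨ y = -(2 * n))) := by
  have hrep : (p : ℤ) = (1 - 2 * u) ^ 2 + (4 * n) ^ 2 := by rw [hpu, hu]; ring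
  have hmod : (1 - 2 * u) % 4 = 1 := by
    obtain ⟨k, rfl⟩ := hne
    have : u = 4 * k ^ 2 := by rw [hu]; ring
    omega
  refine ⟨by linear_combination hrep, hmod, fun x y hxy hx => ?_⟩
  rcases Int.sq_add_sq_unique_of_prime (Nat.prime_iff_prime_int.mp hp)
    (by linear_combination hxy : (p : ℤ) = x ^ 2 + (2 * y) ^ 2) hrep
    with ⟨hx2, hy2⟩ | ⟨hx2, -⟩
  · rcases sq_eq_sq_iff_eq_or_eq_neg.mp hx2 with h | h <;>
    rcases sq_eq_sq_iff_eq_or_eq_neg.mp hy2 with h' | h' <;> omega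
  · rcases sq_eq_sq_iff_eq_or_eq_neg.mp hx2 with h | h <;> omega

/-- For even `n ≥ 1`, `u = n²`, and prime `p = 4u² + 12u + 1`, the unique representation
`p = x² + 4y²` with `x ≡ 1 (mod 4)` is given by `x = 1 - 2u`, `y = ±2n`. -/
theorem stmt_2 (n : ℤ) (hn : 1 ≤ n) (hne : Even n) (u : ℤ) (hu : u = n ^ 2)
    (p : ℕ) (hp : p.Prime) (hpu : (p : ℤ) = 4 * u ^ 2 + 12 * u + 1) :
    (p : ℤ) = (1 - 2 * u) ^ 2 + 4 * (2 * n) ^ 2 ∧ (1 - 2 * u) % 4 = 1 ∧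
    (∀ x y : ℤ, (p : ℤ) = x ^ 2 + 4 * y ^ 2 → x % 4 = 1 →
      x = 1 - 2 * u ∧ (y = 2 * n ∨ y = -(2 * n))) :=
  stmt_2_general n hne u hu p hp hpu
end

section
/- Let n ≥ 1 be an even integer, let u = n², and suppose p = 4u² + 12u + 1 is prime. Then p = (2u + 1)² + 2(2n)², and 2u + 1 ≡ 1 (mod 4); moreover, for every pair of integers (a, b) with p = a² + 2b² and a ≡ 1 (mod 4), one has a = 2u + 1 and b = 2n or b = −2n. -/
/-!
Composing two representations `p = a² + 2b² = c² + 2d²` gives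
`p² = (ac + 2bd)² + 2(ad - bc)² = (ac - 2bd)² + 2(ad + bc)²`, while `p` divides
`(ad - bc)(ad + bc) = a²d² - b²c²`. A multiple of `p` whose doubled square is at most `p²`
vanishes, so `ad = ±bc`, and then `a² = c²`, `b² = d²`. The condition `a ≡ 1 (mod 4)` fixes the
sign of `a`.
-/

theorem eq_zero_of_dvd_of_sq_eq_sq_add_two_mul_sq {m x y : ℤ} (hm : m ≠ 0)
    (h : m ^ 2 = x ^ 2 + 2 * y ^ 2) (hdvd : m ∣ y) : y = 0 := by
  have hlt : |y| < |m| := by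
    rw [← sq_lt_sq]
    nlinarith [sq_nonneg x, pow_pos (abs_pos.mpr hm) 2, sq_abs m]
  exact Int.eq_zero_of_abs_lt_dvd ((abs_dvd m y).mpr hdvd) hlt

section TwoRepresentations

variable {p a b c d : ℤ} (h₁ : p = a ^ 2 + 2 * b ^ 2) (h₂ : p = c ^ 2 + 2 * d ^ 2)
include h₁ h₂

theorem mul_eq_or_eq_neg_of_sq_add_two_mul_sq (hp : Prime p) :
    a * d = b * c ∨ a * d = -(b * c) := by
  have hdvd : p ∣ (a * d - b * c) * (a * d + b * c) :=
    ⟨d ^ 2 - b ^ 2, by linear_combination b ^ 2 * h₂ - d ^ 2 * h₁⟩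
  rcases hp.dvd_mul.mp hdvd with hminus | hplus
  · have hzero := eq_zero_of_dvd_of_sq_eq_sq_add_two_mul_sq (x := a * c + 2 * b * d) hp.ne_zero
      (by linear_combination p * h₂ + (c ^ 2 + 2 * d ^ 2) * h₁) hminus
    exact Or.inl (by linear_combination hzero)
  · have hzero := eq_zero_of_dvd_of_sq_eq_sq_add_two_mul_sq (x := a * c - 2 * b * d) hp.ne_zero
      (by linear_combination p * h₂ + (c ^ 2 + 2 * d ^ 2) * h₁) hplus
    exact Or.inr (by linear_combination hzero)

theorem sq_eq_sq_of_sq_add_two_mul_sq (hp : Prime p) : a ^ 2 = c ^ 2 ∧ b ^ 2 = d ^ 2 := by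
  have hsq : (a * d) ^ 2 = (b * c) ^ 2 := by
    rcases mul_eq_or_eq_neg_of_sq_add_two_mul_sq h₁ h₂ hp with h | h <;> rw [h]; ring
  constructor
  · exact mul_right_cancel₀ hp.ne_zero
      (by linear_combination a ^ 2 * h₂ - c ^ 2 * h₁ + 2 * hsq : a ^ 2 * p = c ^ 2 * p)
  · exact mul_right_cancel₀ hp.ne_zero
      (by linear_combination b ^ 2 * h₂ - d ^ 2 * h₁ - hsq : b ^ 2 * p = d ^ 2 * p)

theorem eq_and_eq_or_eq_neg_of_sq_add_two_mul_sq (hp : Prime p) (ha : a % 4 = 1)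
    (hc : c % 4 = 1) : a = c ∧ (b = d ∨ b = -d) := by
  obtain ⟨hac, hbd⟩ := sq_eq_sq_of_sq_add_two_mul_sq h₁ h₂ hp
  refine ⟨?_, sq_eq_sq_iff_eq_or_eq_neg.mp hbd⟩
  rcases sq_eq_sq_iff_eq_or_eq_neg.mp hac with h | h
  · exact h
  · omega

end TwoRepresentations

theorem stmt_3_general (n : ℤ) (hne : Even n) (u : ℤ) (hu : u = n ^ 2)
    (p : ℕ) (hp : p.Prime) (hpu : (p : ℤ) = 4 * u ^ 2 + 12 * u + 1) :
    (p : ℤ) = (2 * u + 1) ^ 2 + 2 * (2 * n) ^ 2 ∧ (2 * u + 1) % 4 = 1 ∧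
    (∀ a b : ℤ, (p : ℤ) = a ^ 2 + 2 * b ^ 2 → a % 4 = 1 →
      a = 2 * u + 1 ∧ (b = 2 * n ∨ b = -(2 * n))) := by
  have hrep : (p : ℤ) = (2 * u + 1) ^ 2 + 2 * (2 * n) ^ 2 := by rw [hpu, hu]; ring
  have hmod : (2 * u + 1) % 4 = 1 := by
    obtain ⟨m, rfl⟩ := hne
    have : u = 4 * m ^ 2 := by rw [hu]; ring
    omega
  exact ⟨hrep, hmod, fun a b hab ha => eq_and_eq_or_eq_neg_of_sq_add_two_mul_sq hab hrep
    (Nat.prime_iff_prime_int.mp hp) ha hmod⟩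

/-- For even `n ≥ 1`, `u = n²`, and prime `p = 4u² + 12u + 1`, the unique representation
`p = a² + 2b²` with `a ≡ 1 (mod 4)` is given by `a = 2u + 1`, `b = ±2n`. -/
theorem stmt_3 (n : ℤ) (hn : 1 ≤ n) (hne : Even n) (u : ℤ) (hu : u = n ^ 2)
    (p : ℕ) (hp : p.Prime) (hpu : (p : ℤ) = 4 * u ^ 2 + 12 * u + 1) :
    (p : ℤ) = (2 * u + 1) ^ 2 + 2 * (2 * n) ^ 2 ∧ (2 * u + 1) % 4 = 1 ∧
    (∀ a b : ℤ, (p : ℤ) = a ^ 2 + 2 * b ^ 2 → a % 4 = 1 →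
      a = 2 * u + 1 ∧ (b = 2 * n ∨ b = -(2 * n))) :=
  stmt_3_general n hne u hu p hp hpu
end

section
/- Let n ≥ 1 be an odd integer, let u = n², and suppose p = 4u² + 12u + 1 is prime. Then p = (2u − 1)² + 4(2n)², and 2u − 1 ≡ 1 (mod 4); moreover, for every pair of integers (x, y) with p = x² + 4y² and x ≡ 1 (mod 4), one has x = 2u − 1 and y = 2n or y = −2n. -/
/-!
Write `p = x² + (2y)²`. Two representations `p = a² + b² = c² + d²` of a prime are the same up to
order and signs: `a²d² - b²c² = p (a² - c²)`, so `p` divides `ad - bc` or `ad + bc`, and since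
`(ac ± bd)² + (ad ∓ bc)² = p²` that factor is `0` or `±p`. In `p = (2u - 1)² + (4n)²` the first
term is `≡ 1 (mod 4)` because `u` is an odd square, so the normalisation `x ≡ 1 (mod 4)` rules out
both the swap of the two squares and the sign change of `x`.
-/

namespace Int

theorem sq_eq_sq_of_sq_mul_sq_eq {p a b c d : ℤ} (hp : p ≠ 0) (h₁ : p = a ^ 2 + b ^ 2)
    (h₂ : p = c ^ 2 + d ^ 2) (h : a ^ 2 * d ^ 2 = b ^ 2 * c ^ 2) :
    a ^ 2 = c ^ 2 ∧ b ^ 2 = d ^ 2 := by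
  have hac : p * a ^ 2 = p * c ^ 2 := by linear_combination a ^ 2 * h₂ - c ^ 2 * h₁ + h
  have ha := mul_left_cancel₀ hp hac
  exact ⟨ha, by linarith⟩

theorem sq_eq_sq_of_sq_add_sq_of_dvd {p a b c d : ℤ} (hp : p ≠ 0) (h₁ : p = a ^ 2 + b ^ 2)
    (h₂ : p = c ^ 2 + d ^ 2) (hdvd : p ∣ a * d - b * c) :
    (a ^ 2 = c ^ 2 ∧ b ^ 2 = d ^ 2) ∨ (a ^ 2 = d ^ 2 ∧ b ^ 2 = c ^ 2) := by
  obtain ⟨k, hk⟩ := hdvd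
  have hsum : (a * c + b * d) ^ 2 + p ^ 2 * k ^ 2 = p ^ 2 := by
    linear_combination (-(c ^ 2 + d ^ 2)) * h₁ - p * h₂ - (a * d - b * c + p * k) * hk
  have hk_le : k ^ 2 ≤ 1 := by
    by_contra! hlt
    nlinarith [sq_nonneg (a * c + b * d), mul_pos (sq_pos_of_ne_zero hp) (sub_pos.2 hlt)]
  have hk01 : k = 0 ∨ k ^ 2 = 1 := by
    rw [← sq_eq_zero_iff]
    have := sq_nonneg k
    omega
  rcases hk01 with rfl | hk1
  · left
    have hadbc : a * d = b * c := by linarith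
    exact sq_eq_sq_of_sq_mul_sq_eq hp h₁ h₂ (by linear_combination (a * d + b * c) * hadbc)
  · right
    have hacbd : a * c + b * d = 0 := by
      rw [hk1, mul_one, add_eq_right, sq_eq_zero_iff] at hsum
      exact hsum
    exact sq_eq_sq_of_sq_mul_sq_eq hp h₁ (by rw [h₂, add_comm])
      (by linear_combination (a * c - b * d) * hacbd)

theorem sq_eq_sq_of_prime_of_sq_add_sq {p a b c d : ℤ} (hp : Prime p) (h₁ : p = a ^ 2 + b ^ 2)
    (h₂ : p = c ^ 2 + d ^ 2) :
    (a ^ 2 = c ^ 2 ∧ b ^ 2 = d ^ 2) ∨ (a ^ 2 = d ^ 2 ∧ b ^ 2 = c ^ 2) := by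
  have hdvd : p ∣ (a * d - b * c) * (a * d + b * c) :=
    ⟨a ^ 2 - c ^ 2, by linear_combination (-a ^ 2) * h₂ + c ^ 2 * h₁⟩
  rcases hp.dvd_mul.mp hdvd with h | h
  · exact sq_eq_sq_of_sq_add_sq_of_dvd hp.ne_zero h₁ h₂ h
  · have h₂' : p = c ^ 2 + (-d) ^ 2 := by rw [h₂, neg_sq]
    have h' : p ∣ a * -d - b * c := by rw [← dvd_neg]; convert h using 1; ring
    simpa only [neg_sq] using sq_eq_sq_of_sq_add_sq_of_dvd hp.ne_zero h₁ h₂' h'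

theorem eq_of_prime_of_sq_add_four_mul_sq {p x y a b : ℤ} (hp : Prime p)
    (h₁ : p = x ^ 2 + 4 * y ^ 2) (h₂ : p = a ^ 2 + 4 * b ^ 2) (hx : x % 4 = 1) (ha : a % 4 = 1) :
    x = a ∧ (y = b ∨ y = -b) := by
  rcases sq_eq_sq_of_prime_of_sq_add_sq hp (b := 2 * y) (d := 2 * b)
      (by rw [h₁]; ring) (by rw [h₂]; ring) with ⟨hxa, hyb⟩ | ⟨hxb, -⟩
  · refine ⟨?_, ?_⟩
    · rcases sq_eq_sq_iff_eq_or_eq_neg.mp hxa with h | h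
      · exact h
      · omega
    · rcases sq_eq_sq_iff_eq_or_eq_neg.mp hyb with h | h <;> [left; right] <;> linarith
  · exfalso
    rcases sq_eq_sq_iff_eq_or_eq_neg.mp hxb with h | h <;> omega

end Int

theorem stmt_4_general (n : ℤ) (hno : Odd n) (u : ℤ) (hu : u = n ^ 2)
    (p : ℕ) (hp : p.Prime) (hpu : (p : ℤ) = 4 * u ^ 2 + 12 * u + 1) :
    (p : ℤ) = (2 * u - 1) ^ 2 + 4 * (2 * n) ^ 2 ∧ (2 * u - 1) % 4 = 1 ∧
    (∀ x y : ℤ, (p : ℤ) = x ^ 2 + 4 * y ^ 2 → x % 4 = 1 →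
      x = 2 * u - 1 ∧ (y = 2 * n ∨ y = -(2 * n))) := by
  have hrep : (p : ℤ) = (2 * u - 1) ^ 2 + 4 * (2 * n) ^ 2 := by rw [hpu, hu]; ring
  have hu4 : u % 4 = 1 := hu ▸ Int.sq_mod_four_eq_one_of_odd hno
  have hmod : (2 * u - 1) % 4 = 1 := by omega
  exact ⟨hrep, hmod, fun x y hxy hx =>
    Int.eq_of_prime_of_sq_add_four_mul_sq (Nat.prime_iff_prime_int.mp hp) hxy hrep hx hmod⟩

/-- For odd `n ≥ 1`, `u = n²`, and prime `p = 4u² + 12u + 1`, the unique representation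
`p = x² + 4y²` with `x ≡ 1 (mod 4)` is given by `x = 2u - 1`, `y = ±2n`. -/
theorem stmt_4 (n : ℤ) (hn : 1 ≤ n) (hno : Odd n) (u : ℤ) (hu : u = n ^ 2)
    (p : ℕ) (hp : p.Prime) (hpu : (p : ℤ) = 4 * u ^ 2 + 12 * u + 1) :
    (p : ℤ) = (2 * u - 1) ^ 2 + 4 * (2 * n) ^ 2 ∧ (2 * u - 1) % 4 = 1 ∧
    (∀ x y : ℤ, (p : ℤ) = x ^ 2 + 4 * y ^ 2 → x % 4 = 1 →
      x = 2 * u - 1 ∧ (y = 2 * n ∨ y = -(2 * n))) :=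
  stmt_4_general n hno u hu p hp hpu
end

section
/- Let n ≥ 1 be an odd integer, let u = n², and suppose p = 4u² + 12u + 1 is prime. Then p = (−2u − 1)² + 2(2n)², and −2u − 1 ≡ 1 (mod 4); moreover, for every pair of integers (a, b) with p = a² + 2b² and a ≡ 1 (mod 4), one has a = −2u − 1 and b = 2n or b = −2n. -/
/-!
If a prime `p` has two representations `p = a² + 2b² = c² + 2d²`, then `p` divides
`(ad - bc)(ad + bc) = p(d² - b²)`, hence one of the factors. Multiplying the two representations
gives `p² = (ac ± 2bd)² + 2(ad ∓ bc)²`, and a multiple of `p` can occur as `y` in `x² + 2y² = p²`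
only if it is `0`. So `(ad)² = (bc)²`, which forces `b² = d²` and `a² = c²`; the normalisation
`a ≡ c ≡ 1 (mod 4)` then fixes the sign of `a`.
-/

namespace Int

theorem eq_zero_of_dvd_of_sq_add_two_mul_sq_eq_sq {p x y : ℤ} (hdvd : p ∣ y)
    (h : x ^ 2 + 2 * y ^ 2 = p ^ 2) : y = 0 := by
  obtain ⟨k, rfl⟩ := hdvd
  rcases eq_or_ne k 0 with hk | hk
  · simp [hk]
  · have hk2 : 0 < k ^ 2 := by positivity
    have hp : p ^ 2 = 0 := by nlinarith [sq_nonneg x, sq_nonneg p]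
    simp [pow_eq_zero_iff two_ne_zero |>.mp hp]

theorem sq_eq_sq_of_sq_add_two_mul_sq_eq {p a b c d : ℤ} (hp : Prime p)
    (hab : p = a ^ 2 + 2 * b ^ 2) (hcd : p = c ^ 2 + 2 * d ^ 2) :
    a ^ 2 = c ^ 2 ∧ b ^ 2 = d ^ 2 := by
  have hdvd : p ∣ (a * d - b * c) * (a * d + b * c) :=
    ⟨d ^ 2 - b ^ 2, by linear_combination b ^ 2 * hcd - d ^ 2 * hab⟩
  have hsq : (a * d) ^ 2 = (b * c) ^ 2 := by
    rcases hp.dvd_mul.mp hdvd with h | h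
    · have := eq_zero_of_dvd_of_sq_add_two_mul_sq_eq_sq (x := a * c + 2 * b * d) h
        (by linear_combination (-c ^ 2 - 2 * d ^ 2) * hab - p * hcd)
      linear_combination (a * d + b * c) * this
    · have := eq_zero_of_dvd_of_sq_add_two_mul_sq_eq_sq (x := a * c - 2 * b * d) h
        (by linear_combination (-c ^ 2 - 2 * d ^ 2) * hab - p * hcd)
      linear_combination (a * d - b * c) * this
  have hbd : b ^ 2 = d ^ 2 := by
    have : p * (d ^ 2 - b ^ 2) = 0 := by
      linear_combination d ^ 2 * hab - b ^ 2 * hcd + hsq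
    linarith [(mul_eq_zero.mp this).resolve_left hp.ne_zero]
  exact ⟨by linear_combination hcd - hab - 2 * hbd, hbd⟩

theorem eq_of_sq_eq_sq_of_emod_four_eq_one_s5 {a c : ℤ} (h : a ^ 2 = c ^ 2) (ha : a % 4 = 1)
    (hc : c % 4 = 1) : a = c := by
  rcases sq_eq_sq_iff_eq_or_eq_neg.mp h with h | h <;> omega

end Int

theorem stmt_5_general (n : ℤ) (hno : Odd n) (u : ℤ) (hu : u = n ^ 2)
    (p : ℕ) (hp : p.Prime) (hpu : (p : ℤ) = 4 * u ^ 2 + 12 * u + 1) :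
    (p : ℤ) = (-2 * u - 1) ^ 2 + 2 * (2 * n) ^ 2 ∧ (-2 * u - 1) % 4 = 1 ∧
    (∀ a b : ℤ, (p : ℤ) = a ^ 2 + 2 * b ^ 2 → a % 4 = 1 →
      a = -2 * u - 1 ∧ (b = 2 * n ∨ b = -(2 * n))) := by
  have hrep : (p : ℤ) = (-2 * u - 1) ^ 2 + 2 * (2 * n) ^ 2 := by rw [hpu, hu]; ring
  have hu_odd : u % 2 = 1 := by rw [hu, ← Int.odd_iff]; exact hno.pow
  have hmod : (-2 * u - 1) % 4 = 1 := by omega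
  refine ⟨hrep, hmod, fun a b hab ha => ?_⟩
  obtain ⟨ha2, hb2⟩ := Int.sq_eq_sq_of_sq_add_two_mul_sq_eq (Nat.prime_iff_prime_int.mp hp) hab hrep
  exact ⟨Int.eq_of_sq_eq_sq_of_emod_four_eq_one_s5 ha2 ha hmod, sq_eq_sq_iff_eq_or_eq_neg.mp hb2⟩

/-- For odd `n ≥ 1`, `u = n²`, and prime `p = 4u² + 12u + 1`, the unique representation
`p = a² + 2b²` with `a ≡ 1 (mod 4)` is given by `a = -2u - 1`, `b = ±2n`. -/
theorem stmt_5 (n : ℤ) (hn : 1 ≤ n) (hno : Odd n) (u : ℤ) (hu : u = n ^ 2)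
    (p : ℕ) (hp : p.Prime) (hpu : (p : ℤ) = 4 * u ^ 2 + 12 * u + 1) :
    (p : ℤ) = (-2 * u - 1) ^ 2 + 2 * (2 * n) ^ 2 ∧ (-2 * u - 1) % 4 = 1 ∧
    (∀ a b : ℤ, (p : ℤ) = a ^ 2 + 2 * b ^ 2 → a % 4 = 1 →
      a = -2 * u - 1 ∧ (b = 2 * n ∨ b = -(2 * n))) :=
  stmt_5_general n hno u hu p hp hpu
end

section
/- Let n ≥ 1 be an even integer, let u = n², and suppose p = 4u² + 12u + 1 is prime. Then 2 is a fourth power in ℤ/pℤ, i.e., there exists x ∈ ℤ/pℤ with x⁴ = 2. -/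
/-!
With `q = 2u + 3` we have `q² = p + 8`, so `q² = 8` in `ℤ/pℤ`. Since `n` is even, `q ≡ 3 (mod 8)`
and `p ≡ 1 (mod 8)`. Quadratic reciprocity gives `(q/p) = (p/q) = (-8/q) = (-2/q) = 1`, so
`q = s²` and `s⁴ = 8`; also `2 = t²` because `p ≡ 1 (mod 8)`. Then `(s/t)⁴ = 8/4 = 2`.
-/

open jacobiSym

theorem exists_pow_four_eq_two_of_isSquare_sq_eq_eight {K : Type*} [Field K] {a : K}
    (ha : IsSquare a) (ha8 : a ^ 2 = 8) (h2 : IsSquare (2 : K)) : ∃ x : K, x ^ 4 = 2 := by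
  obtain ⟨s, rfl⟩ := ha
  obtain ⟨t, ht⟩ := h2
  refine ⟨s / t, ?_⟩
  rcases eq_or_ne t 0 with rfl | ht0
  · simp [ht]
  · rw [div_pow, div_eq_iff (pow_ne_zero 4 ht0)]
    linear_combination ha8 + 2 * (2 + t * t) * ht

theorem mod_eight_eq_one_of_sq_eq_add_eight {p q : ℕ} (hq : q % 8 = 3) (h : q ^ 2 = p + 8) :
    p % 8 = 1 := by
  have hq2 : q ^ 2 % 8 = 1 := by rw [Nat.pow_mod, hq]
  omega

theorem jacobiSym_eq_one_of_sq_eq_add_eight {p q : ℕ} (hq : q % 8 = 3) (h : q ^ 2 = p + 8) :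
    jacobiSym q p = 1 := by
  have hp := mod_eight_eq_one_of_sq_eq_add_eight hq h
  have hq_odd : Odd q := Nat.odd_iff.mpr (by omega)
  have hpq : (p : ℤ) % q = (-2 * 2 ^ 2 : ℤ) % q := by
    have hZ : (q : ℤ) ^ 2 = p + 8 := by exact_mod_cast h
    have : (p : ℤ) = -2 * 2 ^ 2 + q * q := by linear_combination -hZ
    rw [this, Int.add_mul_emod_self_left]
  have h2q : Int.gcd 2 q = 1 := Nat.coprime_two_left.mpr hq_odd
  rw [quadratic_reciprocity_one_mod_four' hq_odd (by omega), mod_left' hpq, mul_left,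
    sq_one' h2q, at_neg_two hq_odd, ZMod.χ₈'_nat_eq_if_mod_eight]
  simp [hq, Nat.odd_iff.mp hq_odd]

theorem ZMod.exists_pow_four_eq_two_of_sq_eq_add_eight {p q : ℕ} [Fact p.Prime]
    (hq : q % 8 = 3) (h : q ^ 2 = p + 8) : ∃ x : ZMod p, x ^ 4 = 2 := by
  have hp := mod_eight_eq_one_of_sq_eq_add_eight hq h
  have hq_sq : IsSquare (q : ZMod p) := by
    simpa using ZMod.isSquare_of_jacobiSym_eq_one (jacobiSym_eq_one_of_sq_eq_add_eight hq h)
  have hq8 : (q : ZMod p) ^ 2 = 8 := by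
    simpa using congrArg (Nat.cast : ℕ → ZMod p) h
  have h2_sq : IsSquare (2 : ZMod p) :=
    (ZMod.exists_sq_eq_two_iff (by omega)).mpr (Or.inl hp)
  exact exists_pow_four_eq_two_of_isSquare_sq_eq_eight hq_sq hq8 h2_sq

theorem stmt_6_general (n : ℕ) (hne : Even n) (u : ℕ) (hu : u = n ^ 2)
    (p : ℕ) (hp : p = 4 * u ^ 2 + 12 * u + 1) (hprime : p.Prime) :
    ∃ x : ZMod p, x ^ 4 = 2 := by
  have : Fact p.Prime := ⟨hprime⟩
  obtain ⟨k, rfl⟩ := hne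
  have hq : (2 * u + 3) % 8 = 3 := by
    rw [hu, show (k + k) ^ 2 = 4 * k ^ 2 by ring]
    omega
  have hsq : (2 * u + 3) ^ 2 = p + 8 := by rw [hp]; ring
  exact ZMod.exists_pow_four_eq_two_of_sq_eq_add_eight hq hsq

/-- For even `n ≥ 1`, `u = n²`, and prime `p = 4u² + 12u + 1`, the element `2` is a fourth
power in `ℤ/pℤ`. -/
theorem stmt_6 (n : ℕ) (hn : 1 ≤ n) (hne : Even n) (u : ℕ) (hu : u = n ^ 2)
    (p : ℕ) (hp : p = 4 * u ^ 2 + 12 * u + 1) (hprime : p.Prime) :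
    ∃ x : ZMod p, x ^ 4 = 2 :=
  stmt_6_general n hne u hu p hp hprime
end

section
/- Let n ≥ 1 be an odd integer, let u = n², and suppose p = 4u² + 12u + 1 is prime. Then 2 is a square in ℤ/pℤ but not a fourth power in ℤ/pℤ, i.e., there exists x ∈ ℤ/pℤ with x² = 2, but there is no x ∈ ℤ/pℤ with x⁴ = 2. -/
/-!
With `m = 2u + 3` we have `m² = p + 8`. Since `u ≡ 1 (mod 4)`, we get `p ≡ 1 (mod 8)`,
hence `2` and `-1` are squares mod `p`. If `2 = x⁴`, then `(2x²)² = 8 = m²`, so `m = ±2x²`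
would be a square. But by reciprocity `(m/p) = (p/m) = (-8/m) = -1`, because `m ≡ 5 (mod 8)`.
-/

theorem Nat.sq_mod_four_eq_one_of_odd {n : ℕ} (hn : Odd n) : n ^ 2 % 4 = 1 := by
  obtain ⟨k, rfl⟩ := hn
  rw [show (2 * k + 1) ^ 2 = 4 * (k * k + k) + 1 by ring]
  omega

theorem jacobiSym_neg_eight_of_mod_eight_eq_five {m : ℕ} (hm : m % 8 = 5) :
    jacobiSym (-8) m = -1 := by
  have hm2 : m % 2 = 1 := by omega
  have hodd : Odd m := Nat.odd_iff.mpr hm2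
  rw [show (-8 : ℤ) = -2 * 2 ^ 2 by norm_num, jacobiSym.mul_left, jacobiSym.pow_left,
    jacobiSym.at_neg_two hodd, jacobiSym.at_two hodd, ZMod.χ₈'_nat_eq_if_mod_eight,
    ZMod.χ₈_nat_eq_if_mod_eight]
  simp [hm, hm2]

theorem ZMod.not_isSquare_of_modEq_neg_eight {p m : ℕ} [Fact p.Prime] (hp : p % 4 = 1)
    (hm : m % 8 = 5) (hpm : (p : ℤ) ≡ -8 [ZMOD m]) : ¬IsSquare (m : ZMod p) := by
  rw [← legendreSym.eq_neg_one_iff', jacobiSym.legendreSym.to_jacobiSym,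
    ← jacobiSym.quadratic_reciprocity_one_mod_four hp (Nat.odd_iff.mpr (by omega)),
    jacobiSym.mod_left' hpm]
  exact jacobiSym_neg_eight_of_mod_eight_eq_five hm

theorem not_exists_pow_four_eq_two {R : Type*} [CommRing R] [NoZeroDivisors R]
    (h2 : IsSquare (2 : R)) (hneg : IsSquare (-1 : R)) {c : R} (hc : c ^ 2 = 8)
    (hnc : ¬IsSquare c) : ¬∃ x : R, x ^ 4 = 2 := by
  rintro ⟨x, hx⟩
  have hsq : c ^ 2 = (2 * x ^ 2) ^ 2 := by linear_combination hc - 4 * hx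
  have h2x : IsSquare (2 * x ^ 2) := h2.mul (.sq x)
  rcases sq_eq_sq_iff_eq_or_eq_neg.mp hsq with h | h
  · exact hnc (h ▸ h2x)
  · exact hnc (h ▸ neg_one_mul (2 * x ^ 2) ▸ hneg.mul h2x)

theorem stmt_7_general (n : ℕ) (hno : Odd n) (u : ℕ) (hu : u = n ^ 2)
    (p : ℕ) (hp : p = 4 * u ^ 2 + 12 * u + 1) (hprime : p.Prime) :
    (∃ x : ZMod p, x ^ 2 = 2) ∧ ¬ (∃ x : ZMod p, x ^ 4 = 2) := by
  have : Fact p.Prime := ⟨hprime⟩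
  have hu4 : u % 4 = 1 := hu ▸ Nat.sq_mod_four_eq_one_of_odd hno
  obtain ⟨j, hj⟩ : ∃ j, u = 4 * j + 1 := ⟨u / 4, by omega⟩
  have hp8 : p % 8 = 1 := by
    have hpj : p = 8 * (8 * j ^ 2 + 10 * j + 2) + 1 := by rw [hp, hj]; ring
    omega
  have h2 : IsSquare (2 : ZMod p) := (ZMod.exists_sq_eq_two_iff (by omega)).mpr (Or.inl hp8)
  refine ⟨h2.imp fun s hs => by rw [sq, ← hs], ?_⟩
  obtain ⟨m, hm⟩ : ∃ m, m = 2 * u + 3 := ⟨_, rfl⟩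
  have hpm : (p : ℤ) + 8 = (m : ℤ) ^ 2 := by rw [hp, hm]; push_cast; ring
  refine not_exists_pow_four_eq_two h2 (ZMod.exists_sq_eq_neg_one_iff.mpr (by omega))
    (c := (m : ZMod p)) ?_ (ZMod.not_isSquare_of_modEq_neg_eight (by omega) (by omega) ?_)
  · have h := congrArg (Int.cast : ℤ → ZMod p) hpm
    push_cast [ZMod.natCast_self] at h
    rw [← h, zero_add]
  · exact Int.modEq_iff_dvd.mpr ⟨-m, by linear_combination -hpm⟩

/-- For odd `n ≥ 1`, `u = n²`, and prime `p = 4u² + 12u + 1`, the element `2` is a square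
in `ℤ/pℤ` but not a fourth power in `ℤ/pℤ`. -/
theorem stmt_7 (n : ℕ) (hn : 1 ≤ n) (hno : Odd n) (u : ℕ) (hu : u = n ^ 2)
    (p : ℕ) (hp : p = 4 * u ^ 2 + 12 * u + 1) (hprime : p.Prime) :
    (∃ x : ZMod p, x ^ 2 = 2) ∧ ¬ (∃ x : ZMod p, x ^ 4 = 2) :=
  stmt_7_general n hno u hu p hp hprime
end

section
/- Let p be a prime with p ≡ 1 (mod 16), let α be a generator of the multiplicative group of ℤ/pℤ, let C_i (indices mod 8) be the order-8 cyclotomic cosets, and let (i,j) (indices mod 8) be the order-8 cyclotomic numbers. Let S = C_0 ∪ C_1 and T = C_4 ∪ C_5. Then for every ℓ with 0 ≤ ℓ ≤ 7 and every h ∈ C_ℓ, the number of pairs (s,t) with s ∈ S, t ∈ T, and s + t = h equals v_ℓ := (4,ℓ) + (5,ℓ) + (3,ℓ−1) + (4,ℓ−1) (indices taken mod 8); moreover v_ℓ = v_{ℓ+4} for 0 ≤ ℓ ≤ 3. -/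
/-!
Dividing by `s` turns a representation `h = s + t` with `s ∈ C a`, `t ∈ C b` and `h ∈ C ℓ`
into a solution of `1 + x = y` with `x = t / s ∈ C (b - a)` and `y = h / s ∈ C (ℓ - a)`, so
such representations are counted by the cyclotomic number `(b - a, ℓ - a)`; splitting `S × T`
into the four products `C a × C b` gives `v ℓ`. Multiplication by `α ^ 4` exchanges `S` and `T`,
so together with swapping the summands it matches the representations of `h` with those of
`α ^ 4 * h ∈ C (ℓ + 4)`, whence `v ℓ = v (ℓ + 4)`.
-/

open Set Pointwise

namespace Set

variable {G : Type*}

lemma ncard_antidiagonal_union_left [Add G] [Finite G] {s₁ s₂ : Set G} (h : Disjoint s₁ s₂)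
    (t : Set G) (a : G) :
    (antidiagonal (s₁ ∪ s₂) t a).ncard =
      (antidiagonal s₁ t a).ncard + (antidiagonal s₂ t a).ncard := by
  have hunion : antidiagonal (s₁ ∪ s₂) t a = antidiagonal s₁ t a ∪ antidiagonal s₂ t a := by
    ext; simp only [mem_antidiagonal, mem_union, or_and_right]
  rw [hunion, ncard_union_eq (disjoint_left.2 fun _ h₁ h₂ => disjoint_left.1 h h₁.1 h₂.1)]

lemma ncard_antidiagonal_comm [AddCommMagma G] (s t : Set G) (a : G) :
    (antidiagonal s t a).ncard = (antidiagonal t s a).ncard := by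
  rw [← ncard_image_of_injective _ Prod.swap_injective, image_swap_eq_preimage_swap]
  congr 1
  ext
  exact swap_mem_antidiagonal

lemma ncard_antidiagonal_union_right [AddCommMagma G] [Finite G] (s : Set G) {t₁ t₂ : Set G}
    (h : Disjoint t₁ t₂) (a : G) :
    (antidiagonal s (t₁ ∪ t₂) a).ncard =
      (antidiagonal s t₁ a).ncard + (antidiagonal s t₂ a).ncard := by
  simp only [ncard_antidiagonal_comm s]
  exact ncard_antidiagonal_union_left h s a

lemma ncard_antidiagonal_smul {M : Type*} [Group M] [AddMonoid G] [DistribMulAction M G]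
    (c : M) (s t : Set G) (a : G) :
    (antidiagonal (c • s) (c • t) (c • a)).ncard = (antidiagonal s t a).ncard := by
  have hpre : antidiagonal s t a = (c • ·) ⁻¹' antidiagonal (c • s) (c • t) (c • a) := by
    ext ⟨x, y⟩
    simp only [mem_preimage, Prod.smul_mk, mem_antidiagonal, smul_mem_smul_set_iff,
      ← smul_add, smul_left_cancel_iff]
  rw [hpre, ncard_preimage_of_injective_subset_range (MulAction.injective c)
    (by simp [(MulAction.surjective c).range_eq])]

lemma ncard_antidiagonal_smul_of_smul_eq {M : Type*} [Group M] [AddCommMonoid G]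
    [DistribMulAction M G] {c : M} {s t : Set G} (hs : c • s = t) (ht : c • t = s) (a : G) :
    (antidiagonal s t (c • a)).ncard = (antidiagonal s t a).ncard :=
  calc (antidiagonal s t (c • a)).ncard = (antidiagonal (c • t) (c • s) (c • a)).ncard := by
        rw [hs, ht]
    _ = (antidiagonal t s a).ncard := ncard_antidiagonal_smul c t s a
    _ = (antidiagonal s t a).ncard := ncard_antidiagonal_comm t s a

end Set

section Cyclotomy

variable {K : Type*} [Field K]

def cyclotomicCoset (α : Kˣ) (e : ℕ) (i : ℤ) : Set K :=
  {x | ∃ v : ℤ, x = ((α ^ ((e : ℤ) * v + i) : Kˣ) : K)}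

noncomputable def cyclotomicNumber (α : Kˣ) (e : ℕ) (i j : ℤ) : ℕ :=
  {x | x ∈ cyclotomicCoset α e i ∧ 1 + x ∈ cyclotomicCoset α e j}.ncard

variable {α : Kˣ} {e f : ℕ} {i j l : ℤ} {x y : K}

lemma zpow_mem_cyclotomicCoset (i : ℤ) : ((α ^ i : Kˣ) : K) ∈ cyclotomicCoset α e i :=
  ⟨0, by rw [mul_zero, zero_add]⟩

lemma ne_zero_of_mem_cyclotomicCoset (hx : x ∈ cyclotomicCoset α e i) : x ≠ 0 := by
  obtain ⟨v, rfl⟩ := hx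
  exact Units.ne_zero _

lemma cyclotomicCoset_eq_of_modEq (h : i ≡ j [ZMOD e]) :
    cyclotomicCoset α e i = cyclotomicCoset α e j := by
  obtain ⟨k, hk⟩ := Int.modEq_iff_dvd.1 h
  ext x
  constructor
  · rintro ⟨v, rfl⟩
    exact ⟨v - k, by rw [show (e : ℤ) * (v - k) + j = e * v + i by linarith]⟩
  · rintro ⟨v, rfl⟩
    exact ⟨v + k, by rw [show (e : ℤ) * (v + k) + i = e * v + j by linarith]⟩

lemma mul_mem_cyclotomicCoset (hx : x ∈ cyclotomicCoset α e i) (hy : y ∈ cyclotomicCoset α e j) :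
    x * y ∈ cyclotomicCoset α e (i + j) := by
  obtain ⟨u, rfl⟩ := hx
  obtain ⟨v, rfl⟩ := hy
  exact ⟨u + v, by rw [← Units.val_mul, ← zpow_add]; ring_nf⟩

lemma inv_mem_cyclotomicCoset (hx : x ∈ cyclotomicCoset α e i) :
    x⁻¹ ∈ cyclotomicCoset α e (-i) := by
  obtain ⟨u, rfl⟩ := hx
  exact ⟨-u, by rw [← Units.val_inv_eq_inv_val, ← zpow_neg]; ring_nf⟩

lemma div_mem_cyclotomicCoset (hx : x ∈ cyclotomicCoset α e i) (hy : y ∈ cyclotomicCoset α e j) :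
    x / y ∈ cyclotomicCoset α e (i - j) := by
  simpa only [div_eq_mul_inv, sub_eq_add_neg] using
    mul_mem_cyclotomicCoset hx (inv_mem_cyclotomicCoset hy)

lemma zpow_smul_cyclotomicCoset (k i : ℤ) :
    (α ^ k : Kˣ) • cyclotomicCoset α e i = cyclotomicCoset α e (k + i) := by
  ext x
  rw [mem_smul_set_iff_inv_smul_mem, Units.smul_def, smul_eq_mul]
  constructor
  · intro hx
    have := mul_mem_cyclotomicCoset (zpow_mem_cyclotomicCoset k) hx
    rwa [Units.mul_inv_cancel_left] at this
  · intro hx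
    have := mul_mem_cyclotomicCoset (zpow_mem_cyclotomicCoset (-k)) hx
    rwa [zpow_neg, neg_add_cancel_left] at this

lemma disjoint_cyclotomicCoset (he : e ∣ orderOf α) (h : ¬ i ≡ j [ZMOD e]) :
    Disjoint (cyclotomicCoset α e i) (cyclotomicCoset α e j) := by
  refine disjoint_left.2 fun x hi hj => h ?_
  obtain ⟨u, rfl⟩ := hi
  obtain ⟨v, hv⟩ := hj
  have hmod := zpow_eq_zpow_iff_modEq.1 (Units.ext hv)
  have hdvd := Int.modEq_iff_dvd.1 (hmod.of_dvd (Int.natCast_dvd_natCast.2 he))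
  refine Int.modEq_iff_dvd.2 ?_
  have := dvd_sub hdvd (dvd_mul_right (e : ℤ) (v - u))
  rwa [show (e : ℤ) * v + j - (e * u + i) - e * (v - u) = j - i by ring] at this

lemma cyclotomicNumber_congr {i' j' : ℤ} (hi : i ≡ i' [ZMOD e]) (hj : j ≡ j' [ZMOD e]) :
    cyclotomicNumber α e i j = cyclotomicNumber α e i' j' := by
  rw [cyclotomicNumber, cyclotomicNumber, cyclotomicCoset_eq_of_modEq hi,
    cyclotomicCoset_eq_of_modEq hj]

lemma bijOn_zpow_cyclotomicCoset [Finite K] (hα : orderOf α = e * f) (i : ℤ) :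
    BijOn (fun u : ℕ => ((α ^ ((e : ℤ) * u + i) : Kˣ) : K)) (Iio f) (cyclotomicCoset α e i) := by
  have hpos : 0 < e * f := hα ▸ orderOf_pos α
  have he : (e : ℤ) ≠ 0 := by exact_mod_cast (Nat.pos_of_mul_pos_right hpos).ne'
  have hf : (0 : ℤ) < f := by exact_mod_cast Nat.pos_of_mul_pos_left hpos
  have hmod : ∀ m n : ℤ, α ^ ((e : ℤ) * m + i) = α ^ ((e : ℤ) * n + i) ↔ m ≡ n [ZMOD f] := by
    intro m n
    rw [zpow_eq_zpow_iff_modEq, hα, Nat.cast_mul, Int.modEq_iff_dvd, Int.modEq_iff_dvd,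
      show (e : ℤ) * n + i - (e * m + i) = e * (n - m) by ring, mul_dvd_mul_iff_left he]
  refine ⟨fun u _ => ⟨u, rfl⟩, fun u hu u' hu' h => ?_, ?_⟩
  · exact (Int.natCast_modEq_iff.1 ((hmod u u').1 (Units.ext h))).eq_of_lt_of_lt hu hu'
  · rintro _ ⟨v, rfl⟩
    have hv := Int.emod_nonneg v hf.ne'
    refine ⟨(v % f).toNat, by have := Int.emod_lt_of_pos v hf; simp only [mem_Iio]; omega, ?_⟩
    refine congrArg Units.val ((hmod _ _).2 ?_)
    rw [Int.toNat_of_nonneg hv]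
    exact Int.mod_modEq v f

lemma cyclotomicNumber_eq_card_filter [Finite K] [DecidableEq K] (hα : orderOf α = e * f)
    (i j : ℤ) :
    cyclotomicNumber α e i j = (Finset.filter (fun uv : ℕ × ℕ =>
      (1 : K) + ((α ^ ((e : ℤ) * uv.1 + i) : Kˣ) : K) = ((α ^ ((e : ℤ) * uv.2 + j) : Kˣ) : K))
      (Finset.range f ×ˢ Finset.range f)).card := by
  have hi := bijOn_zpow_cyclotomicCoset hα i
  have hj := bijOn_zpow_cyclotomicCoset hα j
  rw [cyclotomicNumber, ← ncard_coe_finset]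
  symm
  refine BijOn.ncard_eq (f := fun uv => ((α ^ ((e : ℤ) * uv.1 + i) : Kˣ) : K)) ⟨?_, ?_, ?_⟩
  · rintro ⟨u, v⟩ huv
    simp only [Finset.coe_filter, Finset.mem_product, Finset.mem_range, mem_ofPred_eq] at huv
    obtain ⟨⟨hu, hv⟩, huv⟩ := huv
    exact ⟨hi.mapsTo hu, huv ▸ hj.mapsTo hv⟩
  · rintro ⟨u, v⟩ huv ⟨u', v'⟩ huv' h
    simp only [Finset.coe_filter, Finset.mem_product, Finset.mem_range, mem_ofPred_eq] at huv huv'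
    obtain rfl : u = u' := hi.injOn huv.1.1 huv'.1.1 h
    obtain rfl : v = v' := hj.injOn huv.1.2 huv'.1.2 (huv.2.symm.trans huv'.2)
    rfl
  · rintro x ⟨hx, hx1⟩
    obtain ⟨u, hu, rfl⟩ := hi.surjOn hx
    obtain ⟨v, hv, hv1⟩ := hj.surjOn hx1
    refine ⟨(u, v), ?_, rfl⟩
    simp only [Finset.coe_filter, Finset.mem_product, Finset.mem_range, mem_ofPred_eq]
    exact ⟨⟨hu, hv⟩, hv1.symm⟩

lemma ncard_antidiagonal_cyclotomicCoset {h : K} (hh : h ∈ cyclotomicCoset α e l) (a b : ℤ) :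
    (antidiagonal (cyclotomicCoset α e a) (cyclotomicCoset α e b) h).ncard =
      cyclotomicNumber α e (b - a) (l - a) := by
  refine BijOn.ncard_eq (f := fun st => st.2 / st.1) ⟨?_, ?_, ?_⟩
  · rintro ⟨s, t⟩ ⟨hs, ht, rfl⟩
    have hs0 := ne_zero_of_mem_cyclotomicCoset hs
    refine ⟨div_mem_cyclotomicCoset ht hs, ?_⟩
    rw [show 1 + t / s = (s + t) / s by field_simp]
    exact div_mem_cyclotomicCoset hh hs
  · rintro ⟨s, t⟩ ⟨hs, ht, rfl⟩ ⟨s', t'⟩ ⟨hs', ht', hst⟩ (hdiv : t / s = t' / s')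
    have hs0 := ne_zero_of_mem_cyclotomicCoset hs
    have hs0' := ne_zero_of_mem_cyclotomicCoset hs'
    field_simp at hdiv
    obtain rfl : s = s' :=
      mul_right_cancel₀ (ne_zero_of_mem_cyclotomicCoset hh) (by linear_combination (-s) * hst - hdiv)
    obtain rfl : t = t' := by linear_combination -hst
    rfl
  · rintro x ⟨hx, hx1⟩
    have hx0 := ne_zero_of_mem_cyclotomicCoset hx1
    have hs : h / (1 + x) ∈ cyclotomicCoset α e a := by
      simpa only [sub_sub_cancel] using div_mem_cyclotomicCoset hh hx1
    have ht : h / (1 + x) * x ∈ cyclotomicCoset α e b := by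
      simpa only [add_sub_cancel] using mul_mem_cyclotomicCoset hs hx
    refine ⟨(h / (1 + x), h / (1 + x) * x), ⟨hs, ht, by field_simp⟩, ?_⟩
    have := ne_zero_of_mem_cyclotomicCoset hh
    field_simp

lemma ncard_antidiagonal_union_cyclotomicCoset [Finite K] (he₁ : e ≠ 1) (he : e ∣ orderOf α)
    {h : K} (hh : h ∈ cyclotomicCoset α e l) (a b : ℤ) :
    (antidiagonal (cyclotomicCoset α e a ∪ cyclotomicCoset α e (a + 1))
        (cyclotomicCoset α e b ∪ cyclotomicCoset α e (b + 1)) h).ncard =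
      cyclotomicNumber α e (b - a) (l - a) + cyclotomicNumber α e (b + 1 - a) (l - a) +
        (cyclotomicNumber α e (b - (a + 1)) (l - (a + 1)) +
          cyclotomicNumber α e (b + 1 - (a + 1)) (l - (a + 1))) := by
  have hdisj (c : ℤ) : Disjoint (cyclotomicCoset α e c) (cyclotomicCoset α e (c + 1)) :=
    disjoint_cyclotomicCoset he fun hc =>
      he₁ (Nat.dvd_one.1 (by simpa [Int.natCast_dvd] using Int.modEq_iff_dvd.1 hc))
  simp only [ncard_antidiagonal_union_left (hdisj a), ncard_antidiagonal_union_right _ (hdisj b),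
    ncard_antidiagonal_cyclotomicCoset hh]

end Cyclotomy

/-- Let `p ≡ 1 (mod 16)` be prime, `α` a generator of `(ℤ/pℤ)ˣ`, `C i` the order-8
cyclotomic cosets and `N i j` the order-8 cyclotomic numbers (indices mod 8). With
`S = C 0 ∪ C 1` and `T = C 4 ∪ C 5`, for `0 ≤ ℓ ≤ 7` and `h ∈ C ℓ` the number of
pairs `(s, t) ∈ S × T` with `s + t = h` equals
`v ℓ = N 4 ℓ + N 5 ℓ + N 3 (ℓ- 1) + N 4 (ℓ- 1)`, and `v ℓ = v (ℓ+4)` for `0 ≤ ℓ ≤ 3`. -/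
theorem stmt_12 (p : ℕ) (hp : p.Prime) (h16 : p % 16 = 1)
    (α : (ZMod p)ˣ) (hα : ∀ x : (ZMod p)ˣ, x ∈ Subgroup.zpowers α)
    (C : ℤ → Set (ZMod p))
    (hC : ∀ i : ℤ, C i = {x : ZMod p | ∃ v : ℤ, x = ((α ^ (8 * v + i) : (ZMod p)ˣ) : ZMod p)})
    (N : ℤ → ℤ → ℕ)
    (hN : ∀ i j : ℤ, N i j = (Finset.filter
      (fun uv : ℕ × ℕ => (1 : ZMod p) + ((α ^ (8 * (uv.1 : ℤ) + i) : (ZMod p)ˣ) : ZMod p)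
        = ((α ^ (8 * (uv.2 : ℤ) + j) : (ZMod p)ˣ) : ZMod p))
      (Finset.range ((p - 1) / 8) ×ˢ Finset.range ((p - 1) / 8))).card)
    (S T : Set (ZMod p)) (hS : S = C 0 ∪ C 1) (hT : T = C 4 ∪ C 5)
    (v : ℤ → ℕ)
    (hv : ∀ ℓ : ℤ, v ℓ = N 4 (ℓ % 8) + N 5 (ℓ % 8)
      + N 3 ((ℓ - 1) % 8) + N 4 ((ℓ - 1) % 8)) :
    (∀ ℓ : ℤ, 0 ≤ ℓ → ℓ ≤ 7 → ∀ h ∈ C ℓ,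
      {st : ZMod p × ZMod p | st.1 ∈ S ∧ st.2 ∈ T ∧ st.1 + st.2 = h}.ncard = v ℓ) ∧
    (∀ ℓ : ℤ, 0 ≤ ℓ → ℓ ≤ 3 → v ℓ = v (ℓ + 4)) := by
  have := Fact.mk hp
  have hord : orderOf α = 8 * ((p - 1) / 8) := by
    rw [orderOf_eq_card_of_forall_mem_zpowers hα, Nat.card_eq_fintype_card, ZMod.card_units]
    omega
  obtain rfl : C = cyclotomicCoset α 8 := funext hC
  obtain rfl : N = cyclotomicNumber α 8 := funext₂ fun i j =>
    (hN i j).trans (cyclotomicNumber_eq_card_filter hord i j).symm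
  have hrep (ℓ : ℤ) (h : ZMod p) (hh : h ∈ cyclotomicCoset α 8 ℓ) :
      (antidiagonal S T h).ncard = v ℓ := by
    have := ncard_antidiagonal_union_cyclotomicCoset (by norm_num) (hord ▸ dvd_mul_right 8 _) hh 0 4
    norm_num at this
    rw [hS, hT, this, hv]
    simp only [cyclotomicNumber_congr rfl (Int.mod_modEq _ 8)]
    ring
  refine ⟨fun ℓ _ _ => hrep ℓ, fun ℓ _ _ => ?_⟩
  have hwS : α ^ (4 : ℤ) • S = T := by
    rw [hS, hT, smul_set_union, zpow_smul_cyclotomicCoset, zpow_smul_cyclotomicCoset]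
    norm_num
  have hwT : α ^ (4 : ℤ) • T = S := by
    rw [hS, hT, smul_set_union, zpow_smul_cyclotomicCoset, zpow_smul_cyclotomicCoset,
      cyclotomicCoset_eq_of_modEq (show (4 + 4 : ℤ) ≡ 0 [ZMOD 8] by decide),
      cyclotomicCoset_eq_of_modEq (show (4 + 5 : ℤ) ≡ 1 [ZMOD 8] by decide)]
  have hh := zpow_mem_cyclotomicCoset (e := 8) (α := α) ℓ
  have hwh : α ^ (4 : ℤ) • ((α ^ ℓ : (ZMod p)ˣ) : ZMod p) ∈ cyclotomicCoset α 8 (ℓ + 4) := by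
    rw [add_comm, ← zpow_smul_cyclotomicCoset]
    exact smul_mem_smul_set hh
  rw [← hrep ℓ _ hh, ← hrep (ℓ + 4) _ hwh, ncard_antidiagonal_smul_of_smul_eq hwS hwT]
end

section
/- Let p be a prime with p ≡ 1 (mod 16), let α be a generator of the multiplicative group of ℤ/pℤ, let C_i (indices mod 8) be the order-8 cyclotomic cosets, and let (i,j) (indices mod 8) be the order-8 cyclotomic numbers. Let S = C_0 ∪ C_5 and T = C_1 ∪ C_4. Then for every ℓ with 0 ≤ ℓ ≤ 7 and every h ∈ C_ℓ, the number of pairs (s,t) with s ∈ S, t ∈ T, and s + t = h equals y_ℓ := (1,ℓ) + (4,ℓ) + (4,ℓ+3) + (7,ℓ+3) (indices taken mod 8); moreover y_ℓ = y_{ℓ+4} for 0 ≤ ℓ ≤ 3. -/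
/-!
For `h ∈ C ℓ`, a pair `(s, t) ∈ C a × C b` with `s + t = h` corresponds, through `x = t / s`,
to an `x ∈ C (b - a)` with `1 + x = h / s ∈ C (ℓ - a)`; so such pairs are counted by the
cyclotomic number `(b - a, ℓ - a)`. Splitting `S` and `T` into their disjoint cosets,
`y ℓ = (1, ℓ) + (4, ℓ) + (-4, ℓ - 5) + (-1, ℓ - 5)`. Inversion `x ↦ x⁻¹` gives
`(i, j) = (-i, j - i)`, which carries the four terms of `y ℓ` onto those of `y (ℓ + 4)`.
-/

open Set Pointwise

section AddAntidiagonal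

variable {M : Type*} [Add M] [Finite M] {s₁ s₂ t t₁ t₂ : Set M} {a : M}

theorem Set.ncard_antidiagonal_union_left_s14 (hs : Disjoint s₁ s₂) :
    (antidiagonal (s₁ ∪ s₂) t a).ncard
      = (antidiagonal s₁ t a).ncard + (antidiagonal s₂ t a).ncard := by
  have hunion : antidiagonal (s₁ ∪ s₂) t a
      = antidiagonal s₁ t a ∪ antidiagonal s₂ t a := by
    ext x
    simp only [mem_antidiagonal, mem_union]
    tauto
  rw [hunion, ncard_union_eq]
  exact disjoint_left.2 fun x h₁ h₂ => hs.ne_of_mem h₁.1 h₂.1 rfl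

theorem Set.ncard_antidiagonal_union_right_s14 (ht : Disjoint t₁ t₂) :
    (antidiagonal s₁ (t₁ ∪ t₂) a).ncard
      = (antidiagonal s₁ t₁ a).ncard + (antidiagonal s₁ t₂ a).ncard := by
  have hunion : antidiagonal s₁ (t₁ ∪ t₂) a
      = antidiagonal s₁ t₁ a ∪ antidiagonal s₁ t₂ a := by
    ext x
    simp only [mem_antidiagonal, mem_union]
    tauto
  rw [hunion, ncard_union_eq]
  exact disjoint_left.2 fun x h₁ h₂ => ht.ne_of_mem h₁.2.1 h₂.2.1 rfl

end AddAntidiagonal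

namespace Cyclotomic

variable {K : Type*} [Field K] (α : Kˣ) (e : ℕ)

def coset (i : ℤ) : Set K := {x | ∃ v : ℤ, x = ((α ^ ((e : ℤ) * v + i) : Kˣ) : K)}

noncomputable def number (i j : ℤ) : ℕ :=
  {x : K | x ∈ coset α e i ∧ 1 + x ∈ coset α e j}.ncard

variable {α e} {i j : ℤ} {x y : K}

theorem coset_congr (h : i ≡ j [ZMOD e]) : coset α e i = coset α e j := by
  obtain ⟨k, hk⟩ := h.dvd
  ext x
  constructor <;> rintro ⟨v, rfl⟩
  · exact ⟨v - k, by rw [show (e : ℤ) * (v - k) + j = e * v + i by linarith]⟩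
  · exact ⟨v + k, by rw [show (e : ℤ) * (v + k) + i = e * v + j by linarith]⟩

theorem ne_zero_of_mem_coset (hx : x ∈ coset α e i) : x ≠ 0 := by
  obtain ⟨v, rfl⟩ := hx
  exact Units.ne_zero _

theorem mul_mem_coset (hx : x ∈ coset α e i) (hy : y ∈ coset α e j) :
    x * y ∈ coset α e (i + j) := by
  obtain ⟨v, rfl⟩ := hx
  obtain ⟨w, rfl⟩ := hy
  exact ⟨v + w, by rw [← Units.val_mul, ← zpow_add]; ring_nf⟩

theorem inv_mem_coset (hx : x ∈ coset α e i) : x⁻¹ ∈ coset α e (-i) := by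
  obtain ⟨v, rfl⟩ := hx
  exact ⟨-v, by rw [← Units.val_inv_eq_inv_val, ← zpow_neg]; ring_nf⟩

theorem div_mem_coset (hx : x ∈ coset α e i) (hy : y ∈ coset α e j) :
    x / y ∈ coset α e (i - j) := by
  simpa [div_eq_mul_inv, sub_eq_add_neg] using mul_mem_coset hx (inv_mem_coset hy)

theorem disjoint_coset (he : e ∣ orderOf α) (h : ¬ i ≡ j [ZMOD e]) :
    Disjoint (coset α e i) (coset α e j) := by
  refine disjoint_left.2 ?_
  rintro _ ⟨v, rfl⟩ ⟨w, hw⟩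
  have hmod := (zpow_eq_zpow_iff_modEq.1 (Units.val_injective hw)).dvd
  refine h (Int.modEq_iff_dvd.2 ?_)
  have := (Int.natCast_dvd_natCast.2 he).trans hmod
  rw [show (e : ℤ) * w + j - (e * v + i) = j - i + e * (w - v) by ring] at this
  exact (dvd_add_left (dvd_mul_right _ _)).1 this

theorem number_congr {i' j' : ℤ} (hi : i ≡ i' [ZMOD e]) (hj : j ≡ j' [ZMOD e]) :
    number α e i j = number α e i' j' := by
  rw [number, number, coset_congr hi, coset_congr hj]

theorem inv_mem_coset_and_one_add (h : x ∈ coset α e i ∧ 1 + x ∈ coset α e j) :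
    x⁻¹ ∈ coset α e (-i) ∧ 1 + x⁻¹ ∈ coset α e (j - i) := by
  have hx := ne_zero_of_mem_coset h.1
  refine ⟨inv_mem_coset h.1, ?_⟩
  rw [show 1 + x⁻¹ = (1 + x) / x by field_simp; ring]
  exact div_mem_coset h.2 h.1

theorem number_neg_sub (i j : ℤ) : number α e (-i) (j - i) = number α e i j := by
  rw [number, number, ← ncard_inv]
  congr 1
  ext x
  simp only [mem_inv, mem_ofPred_eq]
  exact ⟨fun h => by simpa using inv_mem_coset_and_one_add h,
    fun h => by simpa using inv_mem_coset_and_one_add h⟩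

theorem number_eq_of_modEq_neg {i' j' : ℤ} (hi : -i ≡ i' [ZMOD e]) (hj : j - i ≡ j' [ZMOD e]) :
    number α e i j = number α e i' j' := by
  rw [← number_neg_sub, number_congr hi hj]

theorem ncard_antidiagonal_coset {a b ℓ : ℤ} {h : K} (hh : h ∈ coset α e ℓ) :
    (antidiagonal (coset α e a) (coset α e b) h).ncard = number α e (b - a) (ℓ - a) := by
  have hh₀ := ne_zero_of_mem_coset hh
  have himage : antidiagonal (coset α e a) (coset α e b) h
      = (fun x => (h / (1 + x), h / (1 + x) * x)) ''
          {x | x ∈ coset α e (b - a) ∧ 1 + x ∈ coset α e (ℓ - a)} := by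
    ext ⟨s, t⟩
    simp only [mem_antidiagonal, mem_image, mem_ofPred_eq, Prod.mk.injEq]
    constructor
    · rintro ⟨hs, ht, rfl⟩
      have hs₀ := ne_zero_of_mem_coset hs
      have hst : 1 + t / s = (s + t) / s := by field_simp
      refine ⟨t / s, ⟨div_mem_coset ht hs, hst ▸ div_mem_coset hh hs⟩, ?_, ?_⟩ <;>
        rw [hst] <;> field_simp
    · rintro ⟨x, ⟨hx, hx₁⟩, rfl, rfl⟩
      have hs := div_mem_coset hh hx₁
      rw [sub_sub_cancel] at hs
      refine ⟨hs, by simpa using mul_mem_coset hs hx, ?_⟩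
      have := ne_zero_of_mem_coset hx₁
      field_simp
  have hinj : InjOn (fun x => (h / (1 + x), h / (1 + x) * x))
      {x | x ∈ coset α e (b - a) ∧ 1 + x ∈ coset α e (ℓ - a)} := by
    rintro x ⟨-, hx₁⟩ x' ⟨-, hx₁'⟩ hxx'
    simp only [Prod.mk.injEq] at hxx'
    have h₁ := ne_zero_of_mem_coset hx₁
    have h₁' := ne_zero_of_mem_coset hx₁'
    have := hxx'.1
    field_simp at this
    linear_combination -this
  rw [himage, hinj.ncard_image, number]

section FiniteOrder

variable {f : ℕ}

theorem coe_zpow_mul_add_eq_iff (ho : orderOf α = e * f) (he : e ≠ 0) (i : ℤ) {v w : ℤ} :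
    ((α ^ ((e : ℤ) * v + i) : Kˣ) : K) = ((α ^ ((e : ℤ) * w + i) : Kˣ) : K) ↔
      v ≡ w [ZMOD f] := by
  rw [Units.val_inj, zpow_eq_zpow_iff_modEq, ho, Nat.cast_mul]
  exact ⟨fun h => (h.add_right_cancel' i).mul_left_cancel' (Int.natCast_ne_zero.2 he),
    fun h => h.mul_left'.add_right i⟩

theorem exists_lt_of_mem_coset (ho : orderOf α = e * f) (he : e ≠ 0) (hf : f ≠ 0)
    (hx : x ∈ coset α e i) :
    ∃ u < f, x = ((α ^ ((e : ℤ) * u + i) : Kˣ) : K) := by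
  obtain ⟨v, rfl⟩ := hx
  have hv : 0 ≤ v % f := Int.emod_nonneg _ (by omega)
  have hv' : v % f < f := Int.emod_lt_of_pos _ (by omega)
  refine ⟨(v % f).toNat, by omega, (coe_zpow_mul_add_eq_iff ho he i).2 ?_⟩
  rw [Int.toNat_of_nonneg hv]
  exact (Int.mod_modEq v f).symm

theorem eq_of_coe_zpow_mul_add_eq (ho : orderOf α = e * f) (he : e ≠ 0) {u u' : ℕ}
    (hu : u < f) (hu' : u' < f)
    (h : ((α ^ ((e : ℤ) * u + i) : Kˣ) : K) = ((α ^ ((e : ℤ) * u' + i) : Kˣ) : K)) : u = u' :=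
  Nat.ModEq.eq_of_lt_of_lt (Int.natCast_modEq_iff.1 ((coe_zpow_mul_add_eq_iff ho he i).1 h)) hu hu'

theorem card_filter_eq_number [DecidableEq K] (ho : orderOf α = e * f) (he : e ≠ 0)
    (hf : f ≠ 0) (i j : ℤ) :
    (Finset.filter
      (fun uv : ℕ × ℕ => (1 : K) + ((α ^ ((e : ℤ) * uv.1 + i) : Kˣ) : K)
        = ((α ^ ((e : ℤ) * uv.2 + j) : Kˣ) : K))
      (Finset.range f ×ˢ Finset.range f)).card = number α e i j := by
  set φ : ℕ × ℕ → K := fun uv => ((α ^ ((e : ℤ) * uv.1 + i) : Kˣ) : K)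
  set F := Finset.filter
    (fun uv : ℕ × ℕ => (1 : K) + φ uv = ((α ^ ((e : ℤ) * uv.2 + j) : Kˣ) : K))
    (Finset.range f ×ˢ Finset.range f) with hF
  have himage : {x : K | x ∈ coset α e i ∧ 1 + x ∈ coset α e j} = φ '' F := by
    ext x
    simp only [mem_ofPred_eq, hF, Finset.coe_filter, Finset.mem_product, Finset.mem_range,
      mem_image, Prod.exists]
    constructor
    · rintro ⟨hx, hx₁⟩
      obtain ⟨u, hu, rfl⟩ := exists_lt_of_mem_coset ho he hf hx
      obtain ⟨v, hv, hv₁⟩ := exists_lt_of_mem_coset ho he hf hx₁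
      exact ⟨u, v, ⟨⟨hu, hv⟩, hv₁⟩, rfl⟩
    · rintro ⟨u, v, ⟨-, hx₁⟩, rfl⟩
      exact ⟨⟨u, rfl⟩, ⟨v, hx₁⟩⟩
  have hinj : InjOn φ F := by
    rintro ⟨u, v⟩ huv ⟨u', v'⟩ huv' h
    simp only [hF, Finset.coe_filter, Finset.mem_product, Finset.mem_range, mem_ofPred_eq]
      at huv huv'
    obtain rfl := eq_of_coe_zpow_mul_add_eq ho he huv.1.1 huv'.1.1 h
    obtain rfl := eq_of_coe_zpow_mul_add_eq ho he huv.1.2 huv'.1.2 (huv.2.symm.trans huv'.2)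
    rfl
  rw [number, himage, hinj.ncard_image, ncard_coe_finset]

end FiniteOrder

end Cyclotomic

open Cyclotomic

/-- Let `p ≡ 1 (mod 16)` be prime, `α` a generator of `(ℤ/pℤ)ˣ`, `C i` the order-8
cyclotomic cosets and `N i j` the order-8 cyclotomic numbers (indices mod 8). With
`S = C 0 ∪ C 5` and `T = C 1 ∪ C 4`, for `0 ≤ ℓ ≤ 7` and `h ∈ C ℓ` the number of
pairs `(s, t) ∈ S × T` with `s + t = h` equals
`y ℓ = N 1 ℓ + N 4 ℓ + N 4 (ℓ+ 3) + N 7 (ℓ+ 3)`, and `y ℓ = y (ℓ+4)` for `0 ≤ ℓ ≤ 3`. -/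
theorem stmt_14 (p : ℕ) (hp : p.Prime) (h16 : p % 16 = 1)
    (α : (ZMod p)ˣ) (hα : ∀ x : (ZMod p)ˣ, x ∈ Subgroup.zpowers α)
    (C : ℤ → Set (ZMod p))
    (hC : ∀ i : ℤ, C i = {x : ZMod p | ∃ v : ℤ, x = ((α ^ (8 * v + i) : (ZMod p)ˣ) : ZMod p)})
    (N : ℤ → ℤ → ℕ)
    (hN : ∀ i j : ℤ, N i j = (Finset.filter
      (fun uv : ℕ × ℕ => (1 : ZMod p) + ((α ^ (8 * (uv.1 : ℤ) + i) : (ZMod p)ˣ) : ZMod p)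
        = ((α ^ (8 * (uv.2 : ℤ) + j) : (ZMod p)ˣ) : ZMod p))
      (Finset.range ((p - 1) / 8) ×ˢ Finset.range ((p - 1) / 8))).card)
    (S T : Set (ZMod p)) (hS : S = C 0 ∪ C 5) (hT : T = C 1 ∪ C 4)
    (y : ℤ → ℕ)
    (hy : ∀ ℓ : ℤ, y ℓ = N 1 (ℓ % 8) + N 4 (ℓ % 8)
      + N 4 ((ℓ + 3) % 8) + N 7 ((ℓ + 3) % 8)) :
    (∀ ℓ : ℤ, 0 ≤ ℓ → ℓ ≤ 7 → ∀ h ∈ C ℓ,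
      {st : ZMod p × ZMod p | st.1 ∈ S ∧ st.2 ∈ T ∧ st.1 + st.2 = h}.ncard = y ℓ) ∧
    (∀ ℓ : ℤ, 0 ≤ ℓ → ℓ ≤ 3 → y ℓ = y (ℓ + 4)) := by
  have : Fact p.Prime := ⟨hp⟩
  have ho : orderOf α = 8 * ((p - 1) / 8) := by
    rw [orderOf_eq_card_of_forall_mem_zpowers hα, Nat.card_eq_fintype_card, ZMod.card_units]
    omega
  have hC' : C = coset α 8 := funext fun i => hC i
  have hN' (i j : ℤ) : N i j = number α 8 i j := by
    rw [hN]
    refine card_filter_eq_number ho (by norm_num) ?_ i j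
    have := hp.two_le
    omega
  have hdisj {i j : ℤ} (h : ¬ i ≡ j [ZMOD 8]) : Disjoint (C i) (C j) :=
    hC' ▸ disjoint_coset (Dvd.intro _ ho.symm) h
  refine ⟨fun ℓ _ _ h hh => ?_, fun ℓ _ _ => ?_⟩
  · rw [hC'] at hh
    rw [← antidiagonal, hS, hT, ncard_antidiagonal_union_left_s14 (hdisj (by decide)),
      ncard_antidiagonal_union_right_s14 (hdisj (by decide)),
      ncard_antidiagonal_union_right_s14 (hdisj (by decide)), hC']
    simp only [ncard_antidiagonal_coset hh, hy, hN']
    rw [← add_assoc]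
    congr 1; congr 1; congr 1
    all_goals exact number_congr (by unfold Int.ModEq; omega) (by unfold Int.ModEq; omega)
  · have h₁ : number α 8 1 (ℓ % 8) = number α 8 7 ((ℓ + 4 + 3) % 8) :=
      number_eq_of_modEq_neg (by decide) (by unfold Int.ModEq; omega)
    have h₂ : number α 8 4 (ℓ % 8) = number α 8 4 ((ℓ + 4) % 8) :=
      number_eq_of_modEq_neg (by decide) (by unfold Int.ModEq; omega)
    have h₃ : number α 8 4 ((ℓ + 3) % 8) = number α 8 4 ((ℓ + 4 + 3) % 8) :=
      number_eq_of_modEq_neg (by decide) (by unfold Int.ModEq; omega)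
    have h₄ : number α 8 7 ((ℓ + 3) % 8) = number α 8 1 ((ℓ + 4) % 8) :=
      number_eq_of_modEq_neg (by decide) (by unfold Int.ModEq; omega)
    rw [hy, hy, hN', hN', hN', hN', h₁, h₂, h₃, h₄, hN', hN', hN', hN']
    ring
end
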